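/- arXiv:2303.11075 — 6 statements merged into one kernel-verified Lean document; each statement's English description precedes it below -/
import Mathlib

section
/- For every predicate p : (ℕ → Bool) → Bool, if there exists a natural number n with p(n̄) = true, then ε(p) = m̄ where m is the least natural number such that p(m̄) = true. -/
/-- `nbar n` is the sequence `0ⁿ1^ω`: `nbar n i = true` iff `n ≤ i`. -/
def nbar (n : ℕ) : ℕ → Bool := fun i => decide (n ≤ i)

/-- `infty` is the constant-false sequence `0^ω`. -/
def infty : ℕ → Bool := fun _ => false

/-- `ℕ∞`: the set of monotone Boolean sequences. -/
def Ninfty : Set (ℕ → Bool) := {x | ∀ i j, i ≤ j → x i ≤ x j}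

/-- The reversed pointwise order `⊑` on `ℕ → Bool`. -/
def sqle (x y : ℕ → Bool) : Prop := ∀ i, y i ≤ x i

/-- The search functional: `eps p i = true` iff `p (nbar n) = true` for some `n ≤ i`. -/
def eps (p : (ℕ → Bool) → Bool) : ℕ → Bool :=
  fun i => decide (∃ n ≤ i, p (nbar n) = true)

/-- If the predicate holds at some `nbar n`, the search result is `nbar m`
for the least such `m`. -/
theorem stmt_4 (p : (ℕ → Bool) → Bool) (h : ∃ n : ℕ, p (nbar n) = true) :
    eps p = nbar (Nat.find h) := by
  funext i
  simp only [eps, nbar, decide_eq_decide]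
  constructor
  · rintro ⟨n, hn, hp⟩
    exact le_trans (Nat.find_le hp) hn
  · intro hi
    exact ⟨Nat.find h, hi, Nat.find_spec h⟩
end

section
/- For every predicate p : (ℕ → Bool) → Bool, the element ε(p) is the infimum (greatest lower bound) of the set { x ∈ ℕ∞ : p(x) = true } in ℕ∞ with respect to the reversed pointwise order ⊑; in particular, when this set is empty, ε(p) = ∞, the top element of (ℕ∞, ⊑). -/
lemma nbar_mem : ∀ n, nbar n ∈ Ninfty := by
  intro n i j hij
  simp only [nbar]
  by_cases h : n ≤ i
  · simp [h, h.trans hij]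
  · simp [h]

lemma eq_nbar_of_true {x : ℕ → Bool} (hx : x ∈ Ninfty) (hex : ∃ k, x k = true) :
    x = nbar (Nat.find hex) := by
  funext j
  simp only [nbar]
  by_cases h : Nat.find hex ≤ j
  · simpa [h] using hx _ _ h (Nat.find_spec hex)
  · simp only [decide_eq_false h]
    by_contra hc
    have : x j = true := by revert hc; cases x j <;> simp
    exact h (Nat.find_le this)

/-- `eps p` is the greatest lower bound (w.r.t. `⊑`) in ℕ∞ of
`{x ∈ ℕ∞ | p x = true}`; in particular it is `∞` when this set is empty. -/
theorem stmt_6 (p : (ℕ → Bool) → Bool) :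
    eps p ∈ Ninfty ∧
    (∀ x ∈ Ninfty, p x = true → sqle (eps p) x) ∧
    (∀ z ∈ Ninfty, (∀ x ∈ Ninfty, p x = true → sqle z x) → sqle z (eps p)) ∧
    ((¬ ∃ x ∈ Ninfty, p x = true) → eps p = infty) := by
  refine ⟨?_, ?_, ?_, ?_⟩
  · intro i j hij
    simp only [eps]
    by_cases h : ∃ n ≤ i, p (nbar n) = true
    · have h2 : ∃ n ≤ j, p (nbar n) = true := by
        obtain ⟨n, hn, hp⟩ := h
        exact ⟨n, hn.trans hij, hp⟩
      rw [decide_eq_true h, decide_eq_true h2]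
    · simp [h]
  · intro x hx hp i hi
    have hi' : x i = true := by revert hi; cases x i <;> simp
    have hfind : ∃ k, x k = true := ⟨i, hi'⟩
    have hxeq := eq_nbar_of_true hx hfind
    have hle : Nat.find hfind ≤ i := Nat.find_le hi'
    simp only [eps, decide_eq_true_eq]
    exact ⟨Nat.find hfind, hle, by rw [← hxeq]; exact hp⟩
  · intro z hz hlb i hi
    have : ∃ n ≤ i, p (nbar n) = true := by
      simpa [eps] using hi
    obtain ⟨n, hn, hp⟩ := this
    have := hlb (nbar n) (nbar_mem n) hp i
    have h2 : nbar n i = true := by simp [nbar, hn]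
    rw [h2] at this
    cases hzi : z i
    · rw [hzi] at this; exact absurd this (by simp)
    · rfl
  · intro hne
    funext i
    simp only [eps, infty, decide_eq_false_iff_not]
    rintro ⟨n, _, hp⟩
    exact hne ⟨nbar n, nbar_mem n, hp⟩
end

section
/- The set ℕ∞ is searchable via ε: for every predicate p : (ℕ → Bool) → Bool (not assumed continuous), p(ε(p)) = true if and only if there exists x ∈ ℕ∞ with p(x) = true. -/
lemma eps_mem (p : (ℕ → Bool) → Bool) : eps p ∈ Ninfty := by
  intro i j hij
  simp only [eps]
  by_cases h : ∃ n ≤ i, p (nbar n) = true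
  · obtain ⟨n, hn, hp⟩ := h
    simp [decide_eq_true (⟨n, hn.trans hij, hp⟩ : ∃ n ≤ j, p (nbar n) = true)]
  · simp [h]

lemma eps_eq_nbar (p : (ℕ → Bool) → Bool) (n : ℕ) (hp : p (nbar n) = true)
    (hmin : ∀ m < n, p (nbar m) ≠ true) : eps p = nbar n := by
  funext i
  simp only [eps, nbar, decide_eq_decide]
  constructor
  · rintro ⟨m, hm, hpm⟩
    rcases lt_or_ge m n with h | h
    · exact absurd hpm (hmin m h)
    · exact h.trans hm
  · intro h; exact ⟨n, h, hp⟩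

/-- ℕ∞ is searchable via `eps`, for arbitrary (possibly discontinuous) predicates. -/
theorem stmt_7 (p : (ℕ → Bool) → Bool) :
    p (eps p) = true ↔ ∃ x ∈ Ninfty, p x = true := by
  constructor
  · intro h; exact ⟨eps p, eps_mem p, h⟩
  · rintro ⟨x, hx, hpx⟩
    by_cases h : ∃ n, p (nbar n) = true
    · rw [eps_eq_nbar p (Nat.find h) (Nat.find_spec h) (fun m hm => Nat.find_min h hm)]
      exact Nat.find_spec h
    · -- no n with p (nbar n) = true; then x = infty and eps p = infty
      push_neg at h
      have hxinf : x = eps p := by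
        funext i
        have hepsf : eps p i = false := by
          simp only [eps, decide_eq_false_iff_not]
          rintro ⟨m, _, hpm⟩; exact h m hpm
        rw [hepsf]
        by_contra hxi
        have hxi : x i = true := by revert hxi; cases x i <;> simp
        -- then x = nbar n₀ for least n₀ with x n₀ = true
        have hex : ∃ n, x n = true := ⟨i, hxi⟩
        set n₀ := Nat.find hex with hn₀
        have hxeq : x = nbar n₀ := by
          funext j
          simp only [nbar]
          rcases le_or_gt n₀ j with hle | hlt
          · have h2 := hx n₀ j hle
            rw [Nat.find_spec hex] at h2
            simp [hle]
            exact Bool.eq_true_of_true_le h2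
          · have h2 := Nat.find_min hex hlt
            simp [Nat.not_le.mpr hlt]
            simpa using h2
        exact h n₀ (hxeq ▸ hpx)
      rw [← hxinf]; exact hpx
end

section
/- If f : (ℕ → Bool) → Bool is continuous with respect to the product topology on ℕ → Bool (Bool discrete) and the discrete topology on Bool, then test(f) = true; that is, if f(ε(λx. decide(f(x+1) = f(∞)))) = f(∞), then f(0̄) = f(∞). -/
/-- The shift `α + 1`: prepend `false` to `α`. -/
def shift (α : ℕ → Bool) : ℕ → Bool :=
  fun i => match i with
  | 0 => false
  | i + 1 => α i

/-- Kreisel's test functional. -/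
def test (f : (ℕ → Bool) → Bool) : Bool :=
  decide (f (eps (fun x => decide (f (shift x) = f infty))) = f infty →
    f (nbar 0) = f infty)

lemma continuous_shift : Continuous shift := by
  apply continuous_pi
  intro i
  cases i with
  | zero => exact continuous_const
  | succ i => exact continuous_apply i

lemma shift_nbar (n : ℕ) : shift (nbar n) = nbar (n + 1) := by
  funext i
  cases i with
  | zero => simp [shift, nbar]
  | succ i => simp [shift, nbar]

lemma tendsto_nbar : Filter.Tendsto nbar Filter.atTop (nhds infty) := by
  rw [tendsto_pi_nhds]
  intro i
  have : ∀ᶠ n in Filter.atTop, nbar n i = infty i := by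
    filter_upwards [Filter.eventually_ge_atTop (i + 1)] with n hn
    simp [nbar, infty]; omega
  exact Filter.Tendsto.congr' (this.mono fun n hn => hn.symm) tendsto_const_nhds

lemma f_nbar_exists_eq (f : (ℕ → Bool) → Bool) (hf : Continuous f) :
    ∃ N, f (nbar N) = f infty := by
  have h := (hf.tendsto infty).comp tendsto_nbar
  have : ∀ᶠ n in Filter.atTop, f (nbar n) = f infty := by
    have : {f infty} ∈ nhds (f infty) := by simp
    exact h this
  exact this.exists

/-- For continuous `f`, `test f = true`. -/
theorem stmt_10 (f : (ℕ → Bool) → Bool) (hf : Continuous f) : test f = true := by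
  simp only [test, decide_eq_true_eq]
  intro h
  set p : (ℕ → Bool) → Bool := fun x => decide (f (shift x) = f infty) with hp
  have hpn : ∀ n, p (nbar n) = true ↔ f (nbar (n + 1)) = f infty := by
    intro n; simp [hp, shift_nbar]
  by_cases hex : ∃ n, f (nbar (n + 1)) = f infty
  · -- eps p = nbar (Nat.find hex)
    have heps : eps p = nbar (Nat.find hex) := by
      funext i
      simp only [eps, nbar, decide_eq_decide]
      constructor
      · rintro ⟨n, hni, hpn'⟩
        exact le_trans (Nat.find_le ((hpn n).mp hpn')) hni
      · intro hi
        exact ⟨Nat.find hex, hi, (hpn _).mpr (Nat.find_spec hex)⟩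
    rw [heps] at h
    cases hN : Nat.find hex with
    | zero => rwa [hN] at h
    | succ m =>
      exfalso
      have : ¬ f (nbar (m + 1)) = f infty := Nat.find_min hex (by omega)
      rw [hN] at h
      exact this h
  · exfalso
    obtain ⟨N, hN⟩ := f_nbar_exists_eq f hf
    cases N with
    | zero =>
      obtain ⟨N', hN'⟩ := f_nbar_exists_eq (fun x => f (shift x))
        (hf.comp continuous_shift)
      have : shift infty = infty := by funext i; cases i <;> simp [shift, infty]
      rw [shift_nbar, this] at hN'
      exact hex ⟨N', hN'⟩
    | succ m => exact hex ⟨m, hN⟩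
end

section
/- There exists a functional F : ((ℕ → Bool) → Bool) → Bool (namely test) such that F(f) = true for every f that is continuous with respect to the product topology on ℕ → Bool (Bool discrete) and the discrete topology on Bool, but F(g) = false for some (necessarily discontinuous) g : (ℕ → Bool) → Bool. In particular, F is constant on continuous arguments but is not a constant functional. -/
lemma nbar_ne_infty (n : ℕ) : nbar n ≠ infty := by
  intro h
  have := congrFun h n
  simp [nbar, infty] at this

/-- There is a functional constant (= true) on continuous arguments but not constant. -/
theorem stmt_12 :
    ∃ F : ((ℕ → Bool) → Bool) → Bool,
      (∀ f : (ℕ → Bool) → Bool, Continuous f → F f = true) ∧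
      ∃ g : (ℕ → Bool) → Bool, F g = false := by
  refine ⟨test, ?_, ?_⟩
  · intro f hf
    unfold test
    rw [decide_eq_true_iff]
    intro hyp
    set p : (ℕ → Bool) → Bool := fun x => decide (f (shift x) = f infty) with hp
    -- there is some n with p (nbar n) = true, by continuity
    have hex : ∃ n, p (nbar n) = true := by
      have h1 : Filter.Tendsto (fun n => f (nbar n)) Filter.atTop (nhds (f infty)) :=
        (hf.tendsto infty).comp tendsto_nbar
      have h2 : ∀ᶠ n in Filter.atTop, f (nbar n) = f infty := by
        have : {f infty} ∈ nhds (f infty) :=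
          IsOpen.mem_nhds (isOpen_discrete _) rfl
        filter_upwards [h1 this] with n hn using hn
      obtain ⟨N, hN⟩ := Filter.eventually_atTop.mp h2
      exact ⟨N, by simp [hp, shift_nbar, hN (N + 1) (by omega)]⟩
    set n₀ := Nat.find hex with hn₀
    have heps : eps p = nbar n₀ := by
      funext i
      simp only [eps, nbar, decide_eq_decide]
      constructor
      · rintro ⟨n, hni, hpn⟩
        exact le_trans (Nat.find_min' hex hpn) hni
      · intro h
        exact ⟨n₀, h, Nat.find_spec hex⟩
    rw [heps] at hyp
    -- n₀ must be 0
    rcases Nat.eq_zero_or_pos n₀ with h0 | h0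
    · rwa [h0] at hyp
    · exfalso
      obtain ⟨m, hm⟩ := Nat.exists_eq_add_of_lt h0
      have hmlt : m < n₀ := by omega
      have : p (nbar m) = true := by
        simp only [hp, shift_nbar, decide_eq_true_iff]
        rw [show m + 1 = n₀ by omega]
        exact hyp
      exact Nat.find_min hex hmlt this
  · classical
    refine ⟨fun α => if α = infty then true else false, ?_⟩
    unfold test
    rw [decide_eq_false_iff_not]
    intro h
    beta_reduce at h
    have heps : eps (fun x => decide ((if shift x = infty then true else false) =
        (if infty = infty then true else false))) = infty := by
      funext i
      simp only [eps, infty, decide_eq_false_iff_not]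
      rintro ⟨n, -, hn⟩
      simp [shift_nbar, nbar_ne_infty] at hn
    rw [heps] at h
    have := h rfl
    rw [if_pos rfl, if_neg (nbar_ne_infty 0)] at this
    exact Bool.false_ne_true this
end

section
/- For every predicate p : (ℕ → Bool) → Bool and every x ∈ ℕ∞ with p(x) = true, one has ε(p) ⊑ x; that is, ε(p) is a lower bound of { x ∈ ℕ∞ : p(x) = true } for the reversed pointwise order. -/
/-- `eps p` is a lower bound of `{x ∈ ℕ∞ | p x = true}` for `⊑`. -/
theorem stmt_13 (p : (ℕ → Bool) → Bool) :
    ∀ x ∈ Ninfty, p x = true → sqle (eps p) x := by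
  intro x hx hp i
  cases hxi : x i with
  | false => simp
  | true =>
    simp only [eps, decide_eq_true_eq]
    have hex : ∃ n, x n = true := ⟨i, hxi⟩
    classical
    let n := Nat.find hex
    have hn : x n = true := Nat.find_spec hex
    have hni : n ≤ i := Nat.find_min' hex hxi
    have hxeq : x = nbar n := by
      funext j
      unfold nbar
      by_cases h : n ≤ j
      · simp [h]
        have := hx n j h
        rw [hn] at this
        exact (le_antisymm (by simp) this).symm.symm
      · simp [h]
        by_contra hc
        have : x j = true := by
          cases hj : x j
          · exact absurd hj hc
          · rfl
        exact h (Nat.find_min' hex this)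
    refine le_of_eq ?_
    symm
    simp only [decide_eq_true_eq]
    exact ⟨n, hni, hxeq ▸ hp⟩
end
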